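/- arXiv:2405.14370 — 3 statements merged into one kernel-verified Lean document; each statement's English description precedes it below -/
import Mathlib

section
/- Let a, b, c, d ∈ Im ℍ ≅ ℝ³ be four points not lying on a common circle, lying on a proper sphere with center m. Then the imaginary part of the cross-ratio cro(a,b,c,d) is parallel to the vector m − a, i.e., Im cro(a,b,c,d) is a normal vector of the circumsphere at a. -/
noncomputable section
open Quaternion

/-- The quaternionic cross-ratio `cro(a,b,c,d) = (a-b)(b-c)⁻¹(c-d)(d-a)⁻¹`. -/
def qcro (a b c d : Quaternion ℝ) : Quaternion ℝ :=
  (a - b) * (b - c)⁻¹ * (c - d) * (d - a)⁻¹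


/-- Points lie on a common circle, or on a common line (degenerate circle). -/
def ConcyclicOrLine (s : Set (Quaternion ℝ)) : Prop :=
  EuclideanGeometry.Concyclic s ∨ Collinear ℝ s

/-!
Translate the sphere to the origin: `A = a - m, B = b - m, C = c - m, D = d - m` are pure
quaternions of the same norm, hence have the same square `-r²`, and the cross-ratio is unchanged.
For `x² = y²` one has `(x - y)(-y) = x(x - y)`, so conjugating through the four factors
of `cro(A,B,C,D)` carries `A` through `-B`, `C`, `-D` back to `A`: the cross-ratio commutes
with `A`. A quaternion commuting with a nonzero pure quaternion `A` has imaginary part parallel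
to `A`.
-/

section SemiconjBy

variable {R : Type*}

theorem semiconjBy_sub_neg_right_of_mul_self_eq [Ring R] {x y : R} (h : x * x = y * y) :
    SemiconjBy (x - y) (-y) x := by
  simp only [SemiconjBy, sub_mul, mul_sub, mul_neg, h]; abel

theorem semiconjBy_sub_neg_left_of_mul_self_eq [Ring R] {x y : R} (h : x * x = y * y) :
    SemiconjBy (x - y) (-x) y := by
  simp only [SemiconjBy, sub_mul, mul_sub, mul_neg, h]; abel

theorem commute_crossRatio_of_mul_self_eq [DivisionRing R] {a b c d : R}
    (hab : a * a = b * b) (hbc : b * b = c * c) (hcd : c * c = d * d) :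
    Commute ((a - b) * (b - c)⁻¹ * (c - d) * (d - a)⁻¹) a :=
  (((semiconjBy_sub_neg_right_of_mul_self_eq hab).mul_left
    (semiconjBy_sub_neg_left_of_mul_self_eq hbc).inv_symm_left₀).mul_left
    (semiconjBy_sub_neg_right_of_mul_self_eq hcd)).mul_left
    (semiconjBy_sub_neg_left_of_mul_self_eq (hab.trans (hbc.trans hcd)).symm).inv_symm_left₀

end SemiconjBy

namespace Quaternion

variable {R : Type*} [Field R] [LinearOrder R] [IsStrictOrderedRing R]

theorem mul_self_eq_mul_self_of_normSq_eq {x y : ℍ[R]} (hx : x.re = 0) (hy : y.re = 0)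
    (h : normSq x = normSq y) : x * x = y * y := by
  rw [← sq, ← sq, sq_eq_neg_normSq.2 hx, sq_eq_neg_normSq.2 hy, h]

theorem exists_im_eq_smul_of_commute {q u : ℍ[R]} (hu : u.re = 0) (hu0 : u ≠ 0)
    (h : Commute q u) : ∃ t : R, q.im = t • u := by
  have him : Commute q.im u := by
    simpa only [eq_sub_of_add_eq' q.re_add_im] using h.sub_left (coe_commute q.re u)
  -- `star (q.im * u) = u * q.im = q.im * u`, so the product is real.
  have hreal : q.im * u = ((q.im * u).re : ℍ[R]) := by
    rw [← star_eq_self, star_mul, star_eq_neg.2 hu, star_eq_neg.2 q.re_im, neg_mul_neg, him.eq]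
  have hn : -normSq u ≠ 0 := neg_ne_zero.2 (normSq_ne_zero.2 hu0)
  have key : (-normSq u) • q.im = (q.im * u).re • u :=
    calc (-normSq u) • q.im = q.im * ((-normSq u : R) : ℍ[R]) := (mul_coe_eq_smul _ _).symm
      _ = q.im * u * u := by rw [mul_assoc, ← sq, sq_eq_neg_normSq.2 hu, coe_neg]
      _ = (q.im * u).re • u := by rw [hreal, coe_mul_eq_smul, re_coe]
  exact ⟨(-normSq u)⁻¹ * (q.im * u).re, by rw [mul_smul, ← key, inv_smul_smul₀ hn]⟩

end Quaternion

theorem qcro_sub_right (a b c d m : Quaternion ℝ) :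
    qcro (a - m) (b - m) (c - m) (d - m) = qcro a b c d := by
  simp only [qcro, sub_sub_sub_cancel_right]

theorem im_cro_parallel_sphere_normal_general (a b c d m : Quaternion ℝ) (r : ℝ)
    (ha : a.re = 0) (hb : b.re = 0) (hc : c.re = 0) (hd : d.re = 0) (hm : m.re = 0)
    (hr : 0 < r)
    (hsa : dist a m = r) (hsb : dist b m = r) (hsc : dist c m = r) (hsd : dist d m = r) :
    ∃ t : ℝ, (qcro a b c d).im = t • (m - a) := by
  have hpure : ∀ x : Quaternion ℝ, x.re = 0 → (x - m).re = 0 := fun x hx => by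
    simp [hx, hm]
  have hnormSq : ∀ x : Quaternion ℝ, dist x m = r → normSq (x - m) = r * r := fun x hx => by
    rw [normSq_eq_norm_mul_self, ← dist_eq_norm, hx]
  have hsq : ∀ x y : Quaternion ℝ, x.re = 0 → y.re = 0 → dist x m = r → dist y m = r →
      (x - m) * (x - m) = (y - m) * (y - m) := fun x y hx hy hxm hym =>
    mul_self_eq_mul_self_of_normSq_eq (hpure x hx) (hpure y hy)
      ((hnormSq x hxm).trans (hnormSq y hym).symm)
  have hcomm : Commute (qcro a b c d) (a - m) := by
    rw [← qcro_sub_right a b c d m]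
    exact commute_crossRatio_of_mul_self_eq (hsq a b ha hb hsa hsb) (hsq b c hb hc hsb hsc)
      (hsq c d hc hd hsc hsd)
  have ha0 : a - m ≠ 0 := by
    rw [sub_ne_zero]; rintro rfl; simp [hr.ne] at hsa
  obtain ⟨t, ht⟩ := exists_im_eq_smul_of_commute (hpure a ha) ha0 hcomm
  exact ⟨-t, by rw [ht, ← neg_sub, smul_neg, neg_smul]⟩

/-- For four non-concyclic purely imaginary quaternions lying on a proper sphere with
center `m`, the imaginary part of their cross-ratio is parallel to `m − a`, i.e. it
is a normal vector of the circumsphere at `a`. -/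
theorem im_cro_parallel_sphere_normal (a b c d m : Quaternion ℝ) (r : ℝ)
    (ha : a.re = 0) (hb : b.re = 0) (hc : c.re = 0) (hd : d.re = 0) (hm : m.re = 0)
    (hab : a ≠ b) (hac : a ≠ c) (had : a ≠ d)
    (hbc : b ≠ c) (hbd : b ≠ d) (hcd : c ≠ d)
    (hnc : ¬ ConcyclicOrLine {a, b, c, d})
    (hr : 0 < r)
    (hsa : dist a m = r) (hsb : dist b m = r) (hsc : dist c m = r) (hsd : dist d m = r) :
    ∃ t : ℝ, (qcro a b c d).im = t • (m - a) :=
  im_cro_parallel_sphere_normal_general a b c d m r ha hb hc hd hm hr hsa hsb hsc hsd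
end
end

section
/- If four points a, b, c, d ∈ Im ℍ ≅ ℝ³ are coplanar but not concyclic, then the imaginary part of the cross-ratio, Im cro(a,b,c,d), is orthogonal to their common plane. -/
noncomputable section
open Quaternion

/-!
Let `n` be a nonzero purely imaginary quaternion orthogonal to the plane of the four points;
it exists because `1` and the two directions of the plane span at most three of the four
dimensions of `ℍ`. Purely imaginary quaternions orthogonal to `n` anticommute with `n`, so the
cross-ratio, a product of four such differences or their inverses, commutes with `n`. Hence for
a direction `v` of the plane, `cro · v` anticommutes with `n`, which forces it to be purely
imaginary, and `⟪Im cro, v⟫ = -Re (cro · v) = 0`.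
-/

def Anticommute {R : Type*} [Mul R] [Neg R] (a b : R) : Prop :=
  a * b = -(b * a)

section Anticommute

variable {R : Type*}

theorem Anticommute.commute_mul_left [Ring R] {a b c : R} (ha : Anticommute a c)
    (hb : Anticommute b c) : Commute (a * b) c := by
  unfold Anticommute at ha hb
  rw [Commute, SemiconjBy, mul_assoc, hb, mul_neg, ← mul_assoc, ha, neg_mul, neg_neg, mul_assoc]

theorem Commute.mul_anticommute [Ring R] {a b c : R} (ha : Commute a c)
    (hb : Anticommute b c) : Anticommute (a * b) c := by
  unfold Anticommute at hb ⊢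
  rw [mul_assoc, hb, mul_neg, ← mul_assoc, ha.eq, mul_assoc]

theorem Anticommute.inv_left [DivisionRing R] {a b : R} (h : Anticommute a b) :
    Anticommute a⁻¹ b := by
  rcases eq_or_ne a 0 with rfl | ha
  · simp [Anticommute]
  have h' : b * a = -(a * b) := by rw [h, neg_neg]
  calc a⁻¹ * b = a⁻¹ * (b * a) * a⁻¹ := by simp [mul_assoc, ha]
    _ = -(a⁻¹ * (a * b) * a⁻¹) := by rw [h', mul_neg, neg_mul]
    _ = -(b * a⁻¹) := by simp [ha]

end Anticommute

namespace Quaternion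

theorem anticommute_of_inner_eq_zero {p n : ℍ} (hp : p.re = 0) (hn : n.re = 0)
    (h : inner ℝ p n = 0) : Anticommute p n := by
  rw [inner_def] at h
  unfold Anticommute
  ext <;> simp_all [re_mul, imI_mul, imJ_mul, imK_mul] <;> linarith

theorem re_eq_zero_of_anticommute {q n : ℍ} (hn : n.re = 0) (hn0 : n ≠ 0)
    (h : Anticommute q n) : q.re = 0 := by
  have hI := congrArg (·.imI) h
  have hJ := congrArg (·.imJ) h
  have hK := congrArg (·.imK) h
  simp only [imI_mul, imJ_mul, imK_mul, imI_neg, imJ_neg, imK_neg, hn] at hI hJ hK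
  have hI' : q.re * n.imI = 0 := by linarith
  have hJ' : q.re * n.imJ = 0 := by linarith
  have hK' : q.re * n.imK = 0 := by linarith
  by_contra hq
  exact hn0 (by ext <;> simp_all)

theorem inner_im_eq_neg_re_mul (q : ℍ) {v : ℍ} (hv : v.re = 0) :
    inner ℝ q.im v = -(q * v).re := by
  simp [inner_def, re_mul, hv]
  ring

theorem inner_im_eq_zero_of_commute {q n v : ℍ} (hn : n.re = 0) (hn0 : n ≠ 0)
    (hq : Commute q n) (hv : v.re = 0) (hvn : Anticommute v n) : inner ℝ q.im v = 0 := by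
  rw [inner_im_eq_neg_re_mul q hv, re_eq_zero_of_anticommute hn hn0 (hq.mul_anticommute hvn),
    neg_zero]

theorem exists_pure_normal_of_coplanar {s : Set ℍ} (hs : Coplanar ℝ s) :
    ∃ n : ℍ, n ≠ 0 ∧ n.re = 0 ∧ ∀ v ∈ vectorSpan ℝ s, inner ℝ v n = 0 := by
  have hV : Module.finrank ℝ ↥((ℝ ∙ (1 : ℍ)) ⊔ vectorSpan ℝ s) ≤ 3 := by
    have := hs.finrank_le_two
    have := Submodule.finrank_add_le_finrank_add_finrank (ℝ ∙ (1 : ℍ)) (vectorSpan ℝ s)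
    rw [finrank_span_singleton one_ne_zero] at this
    omega
  have hVtop : (ℝ ∙ (1 : ℍ)) ⊔ vectorSpan ℝ s ≠ ⊤ := by
    rintro h
    rw [h, finrank_top, finrank_eq_four] at hV
    omega
  obtain ⟨n, hnV, hn0⟩ :=
    (Submodule.ne_bot_iff _).1 (mt Submodule.orthogonal_eq_bot_iff.1 hVtop)
  have hperp := (Submodule.mem_orthogonal _ n).1 hnV
  refine ⟨n, hn0, ?_, fun v hv => hperp v (Submodule.mem_sup_right hv)⟩
  simpa [inner_def] using hperp 1 (Submodule.mem_sup_left (Submodule.mem_span_singleton_self 1))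

end Quaternion

theorem commute_qcro {a b c d n : ℍ} (hab : Anticommute (a - b) n) (hbc : Anticommute (b - c) n)
    (hcd : Anticommute (c - d) n) (hda : Anticommute (d - a) n) : Commute (qcro a b c d) n := by
  rw [qcro, mul_assoc _ (c - d)]
  exact (hab.commute_mul_left hbc.inv_left).mul_left (hcd.commute_mul_left hda.inv_left)

theorem im_cro_orthogonal_to_plane_general (a b c d : Quaternion ℝ)
    (ha : a.re = 0) (hb : b.re = 0) (hc : c.re = 0) (hd : d.re = 0)
    (hcop : Coplanar ℝ ({a, b, c, d} : Set (Quaternion ℝ))) :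
    (inner ℝ ((qcro a b c d).im) (b - a) : ℝ) = 0 ∧
      (inner ℝ ((qcro a b c d).im) (c - a) : ℝ) = 0 ∧
      (inner ℝ ((qcro a b c d).im) (d - a) : ℝ) = 0 := by
  obtain ⟨n, hn0, hnre, hperp⟩ := exists_pure_normal_of_coplanar hcop
  have hre : ∀ x ∈ ({a, b, c, d} : Set ℍ), x.re = 0 := by
    rintro x (rfl | rfl | rfl | rfl) <;> assumption
  have hre_sub : ∀ x ∈ ({a, b, c, d} : Set ℍ), ∀ y ∈ ({a, b, c, d} : Set ℍ),
      (x - y).re = 0 := fun x hx y hy => by rw [re_sub, hre x hx, hre y hy, sub_self]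
  have hanti : ∀ x ∈ ({a, b, c, d} : Set ℍ), ∀ y ∈ ({a, b, c, d} : Set ℍ),
      Anticommute (x - y) n := fun x hx y hy =>
    anticommute_of_inner_eq_zero (hre_sub x hx y hy) hnre (hperp _ (vsub_mem_vectorSpan ℝ hx hy))
  have hq : Commute (qcro a b c d) n :=
    commute_qcro (hanti a (by simp) b (by simp)) (hanti b (by simp) c (by simp))
      (hanti c (by simp) d (by simp)) (hanti d (by simp) a (by simp))
  have key : ∀ x ∈ ({a, b, c, d} : Set ℍ), inner ℝ (qcro a b c d).im (x - a) = 0 :=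
    fun x hx => inner_im_eq_zero_of_commute hnre hn0 hq (hre_sub x hx a (by simp))
      (hanti x hx a (by simp))
  exact ⟨key b (by simp), key c (by simp), key d (by simp)⟩

/-- If four purely imaginary quaternions are coplanar but not concyclic, then the
imaginary part of their cross-ratio is orthogonal to their common plane (i.e. to all
direction vectors of that plane). -/
theorem im_cro_orthogonal_to_plane (a b c d : Quaternion ℝ)
    (ha : a.re = 0) (hb : b.re = 0) (hc : c.re = 0) (hd : d.re = 0)
    (hab : a ≠ b) (hac : a ≠ c) (had : a ≠ d)
    (hbc : b ≠ c) (hbd : b ≠ d) (hcd : c ≠ d)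
    (hcop : Coplanar ℝ ({a, b, c, d} : Set (Quaternion ℝ)))
    (hnc : ¬ ConcyclicOrLine {a, b, c, d}) :
    (inner ℝ ((qcro a b c d).im) (b - a) : ℝ) = 0 ∧
      (inner ℝ ((qcro a b c d).im) (c - a) : ℝ) = 0 ∧
      (inner ℝ ((qcro a b c d).im) (d - a) : ℝ) = 0 :=
  im_cro_orthogonal_to_plane_general a b c d ha hb hc hd hcop
end
end

section
/- Define f(a,b,c,d) := ((b-a)(c-a)^{-1}√(cro(c,a,b,d)) + 1)^{-1} · ((b-a)(c-a)^{-1}√(cro(c,a,b,d))·c + b). Then f satisfies cro(c, a, b, f(a,b,c,d)) = −√(cro(c,a,b,d)). -/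
noncomputable section
open Quaternion
open scoped Classical

/-- The quaternionic square root via the polar form
`q = |q|[cos φ, v sin φ] ↦ √|q|[cos(φ/2), v sin(φ/2)]` (junk on `ℝ_{≤0}`). -/
def qsqrt (q : Quaternion ℝ) : Quaternion ℝ :=
  if q.im = 0 then ((Real.sqrt q.re : ℝ) : Quaternion ℝ)
  else
    Real.sqrt ‖q‖ •
      (((Real.cos (Real.arccos (q.re / ‖q‖) / 2) : ℝ) : Quaternion ℝ) +
        Real.sin (Real.arccos (q.re / ‖q‖) / 2) • (‖q.im‖⁻¹ • q.im))

/-- The "diagonal point" `f(a,b,c,d)`. -/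
def qf (a b c d : Quaternion ℝ) : Quaternion ℝ :=
  ((b - a) * (c - a)⁻¹ * qsqrt (qcro c a b d) + 1)⁻¹ *
    ((b - a) * (c - a)⁻¹ * qsqrt (qcro c a b d) * c + b)

/-- The diagonal point satisfies `cro(c, a, b, f(a,b,c,d)) = −√(cro(c,a,b,d))`. -/
theorem cro_of_diagonal_point (a b c d : Quaternion ℝ)
    (hab : a ≠ b) (hac : a ≠ c) (had : a ≠ d)
    (hbc : b ≠ c) (hbd : b ≠ d) (hcd : c ≠ d)
    (hq : ¬((qcro c a b d).im = 0 ∧ (qcro c a b d).re ≤ 0))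
    (hden : (b - a) * (c - a)⁻¹ * qsqrt (qcro c a b d) + 1 ≠ 0)
    (hfc : qf a b c d ≠ c) :
    qcro c a b (qf a b c d) = - qsqrt (qcro c a b d) := by
  set s := qsqrt (qcro c a b d) with hs
  set m := (b - a) * (c - a)⁻¹ * s with hm
  have hm1 : m + 1 ≠ 0 := hden
  have hbc' : b - c ≠ 0 := sub_ne_zero.mpr hbc
  have hca : c - a ≠ 0 := sub_ne_zero.mpr (Ne.symm hac)
  have hab' : a - b ≠ 0 := sub_ne_zero.mpr hab
  have hf : qf a b c d = (m + 1)⁻¹ * (m * c + b) := rfl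
  have h1 : b - qf a b c d = (m + 1)⁻¹ * (m * (b - c)) := by
    have key : (m + 1) * (b - qf a b c d) = m * (b - c) := by
      rw [hf, mul_sub, mul_inv_cancel_left₀ hm1]; noncomm_ring
    calc b - qf a b c d = (m + 1)⁻¹ * ((m + 1) * (b - qf a b c d)) :=
          (inv_mul_cancel_left₀ hm1 _).symm
      _ = (m + 1)⁻¹ * (m * (b - c)) := by rw [key]
  have h2 : qf a b c d - c = (m + 1)⁻¹ * (b - c) := by
    have key : (m + 1) * (qf a b c d - c) = b - c := by
      rw [hf, mul_sub, mul_inv_cancel_left₀ hm1]; noncomm_ring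
    calc qf a b c d - c = (m + 1)⁻¹ * ((m + 1) * (qf a b c d - c)) :=
          (inv_mul_cancel_left₀ hm1 _).symm
      _ = (m + 1)⁻¹ * (b - c) := by rw [key]
  have h3 : (qf a b c d - c)⁻¹ = (b - c)⁻¹ * (m + 1) := by
    rw [h2, mul_inv_rev, inv_inv]
  have hcomm : (m + 1)⁻¹ * m = m * (m + 1)⁻¹ := by
    have : Commute m (m + 1) := (Commute.refl m).add_right (Commute.one_right m)
    exact (this.inv_right₀.symm).eq
  have habba : (a - b)⁻¹ * (b - a) = -1 := by
    rw [← neg_sub a b, mul_neg, inv_mul_cancel₀ hab']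
  show (c - a) * (a - b)⁻¹ * (b - qf a b c d) * (qf a b c d - c)⁻¹ = -s
  rw [h1, h3]
  calc (c - a) * (a - b)⁻¹ * ((m + 1)⁻¹ * (m * (b - c))) * ((b - c)⁻¹ * (m + 1))
      = (c - a) * (a - b)⁻¹ * (((m + 1)⁻¹ * m) * ((b - c) * (b - c)⁻¹) * (m + 1)) := by
        noncomm_ring
    _ = (c - a) * (a - b)⁻¹ * ((m * (m + 1)⁻¹) * (m + 1)) := by
        rw [hcomm, mul_inv_cancel₀ hbc', mul_one]
    _ = (c - a) * (a - b)⁻¹ * m := by rw [inv_mul_cancel_right₀ hm1]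
    _ = (c - a) * ((a - b)⁻¹ * (b - a)) * (c - a)⁻¹ * s := by rw [hm]; noncomm_ring
    _ = -s := by rw [habba, mul_neg_one, neg_mul, neg_mul,
        mul_inv_cancel₀ hca, one_mul]
end
end
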